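/- arXiv:1911.09052 — 8 statements merged into one kernel-verified Lean document; each statement's English description precedes it below -/
import Mathlib

section
/- Let N be a finite set and g : Finset N → ℝ a set function that is nonnegative (g(S) ≥ 0 for all S), monotone (g(R) ≤ g(Q) whenever R ⊆ Q), and supermodular (for all R ⊆ Q ⊆ N and x ∈ N \ Q, g(R ∪ {x}) − g(R) ≤ g(Q ∪ {x}) − g(Q)). Define the single-task characteristic function v : Finset N → ℝ by v(S) = g(S) + Σ_{j∈S}(g(S) − g({j})) = (|S|+1)·g(S) − Σ_{j∈S} g({j}). Then v is supermodular: for all R ⊆ Q ⊆ N and x ∈ N \ Q, v(R ∪ {x}) − v(R) ≤ v(Q ∪ {x}) − v(Q). -/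
open Finset

/-- The single-task characteristic function
`v(S) = (|S|+1)·g(S) − Σ_{j∈S} g({j})`. -/
noncomputable def singleTaskValue {ι : Type*} [DecidableEq ι] (g : Finset ι → ℝ)
    (S : Finset ι) : ℝ :=
  ((S.card : ℝ) + 1) * g S - ∑ j ∈ S, g {j}

/-- if the gain function `g` is nonnegative, monotone and supermodular
on subsets of `N`, then the single-task characteristic function `v` is supermodular. -/
theorem singleTask_supermodular {ι : Type*} [DecidableEq ι] (N : Finset ι)
    (g : Finset ι → ℝ)
    (hg_nonneg : ∀ S ⊆ N, 0 ≤ g S)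
    (hg_mono : ∀ R Q : Finset ι, R ⊆ Q → Q ⊆ N → g R ≤ g Q)
    (hg_super : ∀ R Q : Finset ι, R ⊆ Q → Q ⊆ N → ∀ x ∈ N \ Q,
      g (insert x R) - g R ≤ g (insert x Q) - g Q) :
    ∀ R Q : Finset ι, R ⊆ Q → Q ⊆ N → ∀ x ∈ N \ Q,
      singleTaskValue g (insert x R) - singleTaskValue g R
        ≤ singleTaskValue g (insert x Q) - singleTaskValue g Q := by
  intro R Q hRQ hQN x hx
  rw [mem_sdiff] at hx
  obtain ⟨hxN, hxQ⟩ := hx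
  have hxR : x ∉ R := fun h => hxQ (hRQ h)
  have hQxN : insert x Q ⊆ N := insert_subset hxN hQN
  have h1 : g (insert x R) - g R ≤ g (insert x Q) - g Q :=
    hg_super R Q hRQ hQN x (by simp [hxN, hxQ])
  have h2 : g R ≤ g Q := hg_mono R Q hRQ hQN
  have h3 : 0 ≤ g (insert x Q) - g Q :=
    sub_nonneg.mpr (hg_mono Q _ (subset_insert _ _) hQxN)
  have hcard : (R.card : ℝ) ≤ Q.card := by exact_mod_cast card_le_card hRQ
  have h4 : ((R.card : ℝ) + 2) * (g (insert x R) - g R)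
      ≤ ((R.card : ℝ) + 2) * (g (insert x Q) - g Q) :=
    mul_le_mul_of_nonneg_left h1 (by positivity)
  have h5 : 0 ≤ ((Q.card : ℝ) - R.card) * (g (insert x Q) - g Q) :=
    mul_nonneg (by linarith) h3
  simp only [singleTaskValue, card_insert_of_notMem hxR, card_insert_of_notMem hxQ,
    sum_insert hxR, sum_insert hxQ]
  push_cast
  nlinarith [h4, h5, h2]
end

section
/- Let N be a finite set, let i, i' ∈ N be distinct parties that are replicas with respect to g : Finset N → ℝ, i.e., g(S ∪ {i}) = g(S ∪ {i'}) = g(S ∪ {i, i'}) for every S ⊆ N (in particular g({i}) = g({i'})). Define v(S) = (|S|+1)·g(S) − Σ_{j∈S} g({j}). Then for every S ⊆ N \ {i} with i' ∈ S, v(S ∪ {i}) − v(S) = g(S) − g({i}); consequently, if g is monotone, then v(S ∪ {i}) − v(S) ≤ g(N) − g({i}) = a_i, the gain of party i from the full market. -/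
open Finset

/-- if `i, i' ∈ N` are distinct replicas with respect to `g`, then for
every coalition `S ⊆ N \ {i}` containing `i'`, the marginal contribution of `i` to
the single-task characteristic function is `v(S ∪ {i}) − v(S) = g(S) − g({i})`;
consequently, if `g` is monotone, it is at most `a_i = g(N) − g({i})`. -/
theorem singleTask_replica_marginal {ι : Type*} [DecidableEq ι] (N : Finset ι)
    (i i' : ι) (hi : i ∈ N) (hi' : i' ∈ N) (hne : i ≠ i')
    (g : Finset ι → ℝ)
    (hrep : ∀ S ⊆ N, g (S ∪ {i}) = g (S ∪ {i'}) ∧ g (S ∪ {i'}) = g (S ∪ {i, i'})) :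
    (∀ S ⊆ N.erase i, i' ∈ S →
        singleTaskValue g (insert i S) - singleTaskValue g S = g S - g {i}) ∧
    ((∀ R Q : Finset ι, R ⊆ Q → Q ⊆ N → g R ≤ g Q) →
      ∀ S ⊆ N.erase i, i' ∈ S →
        singleTaskValue g (insert i S) - singleTaskValue g S ≤ g N - g {i}) := by
  have key : ∀ S ⊆ N.erase i, i' ∈ S →
      singleTaskValue g (insert i S) - singleTaskValue g S = g S - g {i} := by
    intro S hS hi'S
    have hiS : i ∉ S := fun h => (mem_erase.mp (hS h)).1 rfl
    have hSN : S ⊆ N := hS.trans (erase_subset _ _)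
    have hT : S.erase i' ⊆ N := (erase_subset _ _).trans hSN
    have h1 : S.erase i' ∪ {i'} = S := by
      ext x
      by_cases hx2 : x = i' <;> simp [mem_erase, mem_union, hx2, hi'S]
    have h2 : S.erase i' ∪ {i, i'} = insert i S := by
      ext x
      by_cases hx1 : x = i <;> by_cases hx2 : x = i' <;>
        simp [mem_erase, mem_union, mem_insert, hx1, hx2, hi'S]
    have hg : g S = g (insert i S) := by
      have := (hrep (S.erase i') hT).2
      rwa [h1, h2] at this
    have hcard : (insert i S).card = S.card + 1 := card_insert_of_notMem hiS
    have hsum : ∑ j ∈ insert i S, g {j} = g {i} + ∑ j ∈ S, g {j} :=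
      sum_insert hiS
    simp only [singleTaskValue, hcard, hsum, ← hg]
    push_cast
    ring
  refine ⟨key, fun hmono S hS hi'S => ?_⟩
  rw [key S hS hi'S]
  have : g S ≤ g N := hmono S N (hS.trans (erase_subset _ _)) le_rfl
  linarith
end

section
/- Let X be a finite set with |X| = n and let r be an integer with 0 ≤ r and 2r ≤ n. Then there exists an injective map f from the family of r-element subsets of X to the family of (n − r)-element subsets of X such that R ⊆ f(R) for every r-element subset R; since both families have cardinality C(n, r), f is in fact a bijection between them. -/
open Finset

/-! The inclusion graph between the `r`-subsets and the `(n - r)`-subsets of `X` is biregular: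
every `r`-set lies in `C(n - r, n - 2r) = C(n - r, r)` sets of size `n - r`, and every
`(n - r)`-set contains `C(n - r, r)` sets of size `r`. Double counting the edges leaving any
family of `r`-sets shows that its neighbourhood is at least as large, so Hall's theorem gives an
injective choice of supersets; it is a bijection because both families have `C(n, r)` members. -/

theorem Finset.exists_injOn_of_card_bipartiteAbove_ge_of_card_bipartiteBelow_le
    {ι α : Type*} [Nonempty α] (s : Finset ι) (u : Finset α) (r : ι → α → Prop)
    [DecidableRel r] {m : ℕ} (hm : 0 < m) (hs : ∀ i ∈ s, m ≤ #(u.bipartiteAbove r i))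
    (hu : ∀ a ∈ u, #(s.bipartiteBelow r a) ≤ m) :
    ∃ f : ι → α, Set.InjOn f s ∧ ∀ i ∈ s, f i ∈ u ∧ r i (f i) := by
  classical
  let t : s → Finset α := fun i => u.bipartiteAbove r i
  have hall : ∀ v : Finset s, #v ≤ #(v.biUnion t) := by
    intro v
    refine Nat.le_of_mul_le_mul_right (card_mul_le_card_mul (fun (i : s) a => r i a)
      (s := v) (t := v.biUnion t) ?_ ?_) hm
    · intro i hi
      refine (hs i i.2).trans (card_le_card fun a ha => ?_)
      rw [mem_bipartiteAbove]
      exact ⟨mem_biUnion.2 ⟨i, hi, ha⟩, ((mem_bipartiteAbove r).1 ha).2⟩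
    · intro a ha
      obtain ⟨i, -, hai⟩ := mem_biUnion.1 ha
      refine le_trans ?_ (hu a ((mem_bipartiteAbove r).1 hai).1)
      refine card_le_card_of_injOn Subtype.val (fun j hj => ?_) Subtype.val_injective.injOn
      rw [mem_coe, mem_bipartiteBelow] at hj ⊢
      exact ⟨j.2, hj.2⟩
  obtain ⟨f, hf_inj, hf_mem⟩ := (all_card_le_biUnion_card_iff_exists_injective t).1 hall
  refine ⟨fun i => if hi : i ∈ s then f ⟨i, hi⟩ else Classical.arbitrary α, ?_, ?_⟩
  · intro i hi j hj hij
    simp only [mem_coe] at hi hj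
    simp only [dif_pos hi, dif_pos hj] at hij
    exact congrArg Subtype.val (hf_inj hij)
  · intro i hi
    simpa only [dif_pos hi, t, mem_bipartiteAbove] using hf_mem ⟨i, hi⟩

theorem Finset.card_bipartiteBelow_subset_powersetCard_le {α : Type*} [DecidableEq α]
    (X Q : Finset α) (k : ℕ) :
    #((X.powersetCard k).bipartiteBelow (· ⊆ ·) Q) ≤ (#Q).choose k := by
  rw [← card_powersetCard]
  refine card_le_card fun R hR => ?_
  obtain ⟨hR, hRQ⟩ := (mem_bipartiteBelow _).1 hR
  exact mem_powersetCard.2 ⟨hRQ, (mem_powersetCard.1 hR).2⟩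

theorem exists_superset_bijection_general {α : Type*} (X : Finset α)
    (n r : ℕ) (hX : X.card = n) (h2r : 2 * r ≤ n) :
    ∃ f : Finset α → Finset α,
      (∀ R ∈ X.powersetCard r, R ⊆ f R) ∧
      Set.InjOn f ↑(X.powersetCard r) ∧
      Set.BijOn f ↑(X.powersetCard r) ↑(X.powersetCard (n - r)) := by
  classical
  have hr : r ≤ n - r := by omega
  have hdeg_left : ∀ R ∈ X.powersetCard r,
      (n - r).choose r ≤ #((X.powersetCard (n - r)).bipartiteAbove (· ⊆ ·) R) := by
    intro R hR
    obtain ⟨hRX, hRr⟩ := mem_powersetCard.1 hR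
    have h := card_filter_powersetCard_subset R X (n - r) hRX (by omega)
    rw [hX, hRr, Nat.choose_symm hr] at h
    exact h.ge
  have hdeg_right : ∀ Q ∈ X.powersetCard (n - r),
      #((X.powersetCard r).bipartiteBelow (· ⊆ ·) Q) ≤ (n - r).choose r := by
    intro Q hQ
    rw [← (mem_powersetCard.1 hQ).2]
    exact card_bipartiteBelow_subset_powersetCard_le X Q r
  obtain ⟨f, hf_inj, hf⟩ := exists_injOn_of_card_bipartiteAbove_ge_of_card_bipartiteBelow_le
    _ _ _ (Nat.choose_pos hr) hdeg_left hdeg_right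
  have hmaps : Set.MapsTo f (X.powersetCard r) (X.powersetCard (n - r)) := fun R hR => (hf R hR).1
  have hcard : #(X.powersetCard (n - r)) ≤ #(X.powersetCard r) := by
    rw [card_powersetCard, card_powersetCard, hX, Nat.choose_symm (by omega)]
  exact ⟨f, fun R hR => (hf R hR).2, hf_inj, hmaps, hf_inj,
    surjOn_of_injOn_of_card_le f hmaps hf_inj hcard⟩

/-- for a finite set `X` with `|X| = n` and `2r ≤ n`, there is an
injective map `f` from the `r`-element subsets of `X` to the `(n−r)`-element
subsets of `X` with `R ⊆ f(R)` for each `r`-element subset `R`; since both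
families have cardinality `C(n, r)`, `f` is in fact a bijection between them. -/
theorem exists_superset_bijection {α : Type*} [DecidableEq α] (X : Finset α)
    (n r : ℕ) (hX : X.card = n) (h2r : 2 * r ≤ n) :
    ∃ f : Finset α → Finset α,
      (∀ R ∈ X.powersetCard r, R ⊆ f R) ∧
      Set.InjOn f ↑(X.powersetCard r) ∧
      Set.BijOn f ↑(X.powersetCard r) ↑(X.powersetCard (n - r)) :=
  exists_superset_bijection_general X n r hX h2r
end

section
/- Let N be a finite set with |N| = M ≥ 1, let i ∈ N, and let v : Finset N → ℝ be supermodular. Then Σ_{S ⊆ N \ {i}} (|S|! · (M − |S|)! / (M+1)!) · (v(S ∪ {i}) − v(S)) ≤ (1/2) · Σ_{S ⊆ N \ {i}} (|S|! · (M − |S| − 1)! / M!) · (v(S ∪ {i}) − v(S)); equivalently, Σ_{S ⊆ N \ {i}} |S|! · (M − |S| − 1)! · (M − 2|S| − 1) · (v(S ∪ {i}) − v(S)) ≤ 0. -/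
open Finset


private lemma count_supersets {ι : Type*} [DecidableEq ι] {A S : Finset ι} {k : ℕ}
    (hS : S ⊆ A) (hk : S.card = k) :
    ((A.powersetCard (k+1)).filter (fun T => S ⊆ T)).card = A.card - k := by
  have himg : ((A.powersetCard (k+1)).filter (fun T => S ⊆ T))
      = (A \ S).image (fun a => insert a S) := by
    ext T
    simp only [mem_filter, mem_powersetCard, mem_image, mem_sdiff]
    constructor
    · rintro ⟨⟨hTA, hTc⟩, hST⟩
      have hcard : (T \ S).card = 1 := by rw [card_sdiff_of_subset hST, hTc, hk]; omega
      obtain ⟨a, ha⟩ := card_eq_one.mp hcard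
      have haT : a ∈ T \ S := by rw [ha]; exact mem_singleton_self a
      rw [mem_sdiff] at haT
      refine ⟨a, ⟨hTA haT.1, haT.2⟩, ?_⟩
      have hsub : insert a S ⊆ T := insert_subset haT.1 hST
      have hle : T.card ≤ (insert a S).card := by
        rw [card_insert_of_notMem haT.2, hk, hTc]
      exact eq_of_subset_of_card_le hsub hle
    · rintro ⟨a, ⟨haA, haS⟩, rfl⟩
      exact ⟨⟨insert_subset haA hS, by rw [card_insert_of_notMem haS, hk]⟩,
        subset_insert a S⟩
  rw [himg, card_image_of_injOn, card_sdiff_of_subset hS, hk]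
  intro a ha b hb hab
  simp only [mem_coe, mem_sdiff] at ha hb
  have hab' : insert a S = insert b S := hab
  have : a ∈ insert b S := hab' ▸ mem_insert_self a S
  rcases mem_insert.mp this with h | h
  · exact h
  · exact absurd h ha.2

private lemma step_ineq {ι : Type*} [DecidableEq ι] (A : Finset ι) (f : Finset ι → ℝ)
    (hmono : ∀ S T : Finset ι, S ⊆ T → T ⊆ A → f S ≤ f T) (k : ℕ) :
    ((A.card - k : ℕ) : ℝ) * ∑ S ∈ A.powersetCard k, f S
      ≤ ((k + 1 : ℕ) : ℝ) * ∑ T ∈ A.powersetCard (k+1), f T := by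
  have key : ∀ T ∈ A.powersetCard (k+1),
      (A.powersetCard k).filter (fun S => S ⊆ T) = T.powersetCard k := by
    intro T hT
    rw [mem_powersetCard] at hT
    ext S
    simp only [mem_filter, mem_powersetCard]
    exact ⟨fun ⟨⟨_, hc⟩, hST⟩ => ⟨hST, hc⟩, fun ⟨hST, hc⟩ => ⟨⟨hST.trans hT.1, hc⟩, hST⟩⟩
  calc ((A.card - k : ℕ) : ℝ) * ∑ S ∈ A.powersetCard k, f S
      = ∑ S ∈ A.powersetCard k,
          (((A.powersetCard (k+1)).filter (fun T => S ⊆ T)).card : ℝ) * f S := by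
        rw [mul_sum]
        refine sum_congr rfl fun S hS => ?_
        rw [mem_powersetCard] at hS
        rw [count_supersets hS.1 hS.2]
    _ = ∑ S ∈ A.powersetCard k, ∑ T ∈ A.powersetCard (k+1),
          if S ⊆ T then f S else 0 := by
        refine sum_congr rfl fun S _ => ?_
        rw [← sum_filter, sum_const, nsmul_eq_mul]
    _ = ∑ T ∈ A.powersetCard (k+1), ∑ S ∈ A.powersetCard k,
          if S ⊆ T then f S else 0 := sum_comm
    _ = ∑ T ∈ A.powersetCard (k+1), ∑ S ∈ T.powersetCard k, f S := by
        refine sum_congr rfl fun T hT => ?_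
        rw [← key T hT, sum_filter]
    _ ≤ ∑ T ∈ A.powersetCard (k+1), ((k + 1 : ℕ) : ℝ) * f T := by
        refine sum_le_sum fun T hT => ?_
        rw [mem_powersetCard] at hT
        have : ∑ S ∈ T.powersetCard k, f S ≤ ∑ S ∈ T.powersetCard k, f T := by
          refine sum_le_sum fun S hS => ?_
          rw [mem_powersetCard] at hS
          exact hmono S T hS.1 hT.1
        simpa [card_powersetCard, hT.2, Nat.choose_succ_self_right] using this
    _ = ((k + 1 : ℕ) : ℝ) * ∑ T ∈ A.powersetCard (k+1), f T := (mul_sum _ _ _).symm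

private lemma x_step {ι : Type*} [DecidableEq ι] (A : Finset ι) (f : Finset ι → ℝ)
    (hmono : ∀ S T : Finset ι, S ⊆ T → T ⊆ A → f S ≤ f T) (k : ℕ) (hk : k < A.card) :
    (k.factorial : ℝ) * ((A.card - k).factorial : ℝ) * (∑ S ∈ A.powersetCard k, f S)
      ≤ ((k + 1).factorial : ℝ) * ((A.card - (k + 1)).factorial : ℝ)
        * (∑ S ∈ A.powersetCard (k + 1), f S) := by
  have h1 := step_ineq A f hmono k
  have h2 : (0:ℝ) ≤ (k.factorial : ℝ) * ((A.card - k - 1).factorial : ℝ) := by positivity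
  have h3 := mul_le_mul_of_nonneg_left h1 h2
  have e1 : (A.card - k).factorial = (A.card - k) * (A.card - k - 1).factorial := by
    rw [Nat.mul_factorial_pred (by omega)]
  have e2 : A.card - (k + 1) = A.card - k - 1 := by omega
  have e3 : (k + 1).factorial = (k + 1) * k.factorial := Nat.factorial_succ k
  rw [e1, e2, e3]
  push_cast
  push_cast at h3
  nlinarith [h3]

private lemma core_ineq {ι : Type*} [DecidableEq ι] (A : Finset ι) (f : Finset ι → ℝ)
    (hmono : ∀ S T : Finset ι, S ⊆ T → T ⊆ A → f S ≤ f T) :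
    ∑ S ∈ A.powerset, (S.card.factorial * (A.card - S.card).factorial : ℝ)
      * ((A.card : ℝ) - 2 * S.card) * f S ≤ 0 := by
  set m := A.card with hm
  set F : ℕ → ℝ := fun k => ∑ S ∈ A.powersetCard k, f S with hF
  set x : ℕ → ℝ := fun k => (k.factorial : ℝ) * ((m - k).factorial : ℝ) * F k with hx
  -- step: x is nondecreasing below m
  have hstep : ∀ k, k < m → x k ≤ x (k + 1) := fun k hk => x_step A f hmono k hk
  have hchain : ∀ j l : ℕ, j ≤ l → l ≤ m → x j ≤ x l := by
    intro j l hjl hlm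
    induction l with
    | zero => simp [Nat.le_zero.mp hjl]
    | succ n ih =>
      rcases Nat.lt_or_ge j (n + 1) with h | h
      · exact le_trans (ih (Nat.lt_succ_iff.mp h) (le_trans (Nat.le_succ n) hlm))
          (hstep n (by omega))
      · have : j = n + 1 := le_antisymm hjl h
        rw [this]
  -- rewrite the sum
  have hsum : ∑ S ∈ A.powerset, (S.card.factorial * (A.card - S.card).factorial : ℝ)
      * ((A.card : ℝ) - 2 * S.card) * f S
      = ∑ k ∈ range (m + 1), ((m : ℝ) - 2 * k) * x k := by
    rw [sum_powerset]
    refine sum_congr rfl fun k hk => ?_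
    simp only [hx, hF]
    rw [mul_sum, mul_sum]
    refine sum_congr rfl fun S hS => ?_
    rw [mem_powersetCard] at hS
    rw [hS.2]
    ring
  rw [hsum]
  -- Chebyshev-type pairing
  set g : ℕ → ℝ := fun k => ((m : ℝ) - 2 * k) * x k with hg
  have hrefl : ∑ k ∈ range (m + 1), g (m + 1 - 1 - k) = ∑ k ∈ range (m + 1), g k :=
    sum_range_reflect g (m + 1)
  have hterm : ∀ k ∈ range (m + 1), g k + g (m - k) ≤ 0 := by
    intro k hk
    rw [mem_range] at hk
    have hkm : k ≤ m := by omega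
    have hcast : ((m - k : ℕ) : ℝ) = (m : ℝ) - k := by
      push_cast [hkm]; ring
    have hgm : g (m - k) = -((m : ℝ) - 2 * k) * x (m - k) := by
      rw [hg]; simp only []; rw [hcast]; ring
    rw [hgm, hg]; simp only []
    rcases le_or_gt (2 * k) m with h | h
    · have h1 : x k ≤ x (m - k) := hchain k (m - k) (by omega) (by omega)
      have h2 : (0:ℝ) ≤ (m : ℝ) - 2 * k := by
        have : ((2 * k : ℕ) : ℝ) ≤ (m : ℕ) := Nat.cast_le.mpr h
        push_cast at this; linarith
      nlinarith
    · have h1 : x (m - k) ≤ x k := hchain (m - k) k (by omega) hkm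
      have h2 : (m : ℝ) - 2 * k ≤ 0 := by
        have : ((m : ℕ) : ℝ) < ((2 * k : ℕ) : ℝ) := Nat.cast_lt.mpr h
        push_cast at this; linarith
      nlinarith
  have h2S : (2:ℝ) * ∑ k ∈ range (m + 1), g k ≤ 0 := by
    have : ∑ k ∈ range (m + 1), g k + ∑ k ∈ range (m + 1), g (m - k)
        ≤ 0 := by
      rw [← sum_add_distrib]
      simpa using sum_le_sum hterm
    have he : ∑ k ∈ range (m + 1), g (m - k) = ∑ k ∈ range (m + 1), g k := by
      rw [← hrefl]
      refine sum_congr rfl fun k hk => ?_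
      congr 1
    rw [he] at this; linarith
  linarith

/-- for a supermodular characteristic function `v` on a market `N`
with `M` parties and `i ∈ N`, the contribution of the old coalitions to the
(unnormalized) Shapley value of `i` in the market with `M+1` parties is at most
half the (unnormalized) Shapley value of `i` in the original market; equivalently
`Σ_S |S|!(M−|S|−1)!(M−2|S|−1)(v(S∪{i})−v(S)) ≤ 0`. -/
theorem shapley_old_coalitions_bound {ι : Type*} [DecidableEq ι] (N : Finset ι)
    (M : ℕ) (hcard : N.card = M) (hM : 1 ≤ M) (i : ι) (hi : i ∈ N)
    (v : Finset ι → ℝ)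
    (hsuper : ∀ R Q : Finset ι, R ⊆ Q → Q ⊆ N → ∀ x ∈ N \ Q,
      v (insert x R) - v R ≤ v (insert x Q) - v Q) :
    (∑ S ∈ (N.erase i).powerset,
        (S.card.factorial * (M - S.card).factorial : ℝ) / ((M + 1).factorial : ℝ)
          * (v (insert i S) - v S))
      ≤ (1 / 2) * ∑ S ∈ (N.erase i).powerset,
          (S.card.factorial * (M - S.card - 1).factorial : ℝ) / (M.factorial : ℝ)
            * (v (insert i S) - v S) ∧
    (∑ S ∈ (N.erase i).powerset,
        (S.card.factorial * (M - S.card - 1).factorial : ℝ)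
          * ((M : ℝ) - 2 * (S.card : ℝ) - 1) * (v (insert i S) - v S))
      ≤ 0 := by
  classical
  set A := N.erase i with hA
  have hAsub : A ⊆ N := erase_subset i N
  have hAcard : A.card = M - 1 := by rw [hA, card_erase_of_mem hi, hcard]
  set f : Finset ι → ℝ := fun S => v (insert i S) - v S with hf
  have hmono : ∀ S T : Finset ι, S ⊆ T → T ⊆ A → f S ≤ f T := by
    intro S T hST hTA
    refine hsuper S T hST (hTA.trans hAsub) i ?_
    rw [mem_sdiff]
    exact ⟨hi, fun hiT => (mem_erase.mp (hTA hiT)).1 rfl⟩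
  have hcore := core_ineq A f hmono
  have part2 : (∑ S ∈ A.powerset,
      (S.card.factorial * (M - S.card - 1).factorial : ℝ)
        * ((M : ℝ) - 2 * (S.card : ℝ) - 1) * f S) ≤ 0 := by
    calc (∑ S ∈ A.powerset,
        (S.card.factorial * (M - S.card - 1).factorial : ℝ)
          * ((M : ℝ) - 2 * (S.card : ℝ) - 1) * f S)
        = ∑ S ∈ A.powerset, (S.card.factorial * (A.card - S.card).factorial : ℝ)
            * ((A.card : ℝ) - 2 * S.card) * f S := by
          refine sum_congr rfl fun S hS => ?_
          rw [mem_powerset] at hS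
          have hk : S.card ≤ A.card := card_le_card hS
          have e1 : M - S.card - 1 = A.card - S.card := by omega
          have e2 : ((M : ℝ) - 2 * S.card - 1) = ((A.card : ℝ) - 2 * S.card) := by
            have hc : (A.card : ℝ) = (M : ℝ) - 1 := by
              rw [hAcard]
              push_cast [hM]
              ring
            rw [hc]; ring
          rw [e1, e2]
      _ ≤ 0 := hcore
  refine ⟨?_, part2⟩
  have key : (∑ S ∈ A.powerset,
        (S.card.factorial * (M - S.card).factorial : ℝ) / ((M + 1).factorial : ℝ) * f S)
      - (1 / 2) * ∑ S ∈ A.powerset,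
        (S.card.factorial * (M - S.card - 1).factorial : ℝ) / (M.factorial : ℝ) * f S
      = (1 / (2 * ((M + 1).factorial : ℝ))) * ∑ S ∈ A.powerset,
          (S.card.factorial * (M - S.card - 1).factorial : ℝ)
            * ((M : ℝ) - 2 * (S.card : ℝ) - 1) * f S := by
    rw [mul_sum, mul_sum, ← sum_sub_distrib]
    refine sum_congr rfl fun S hS => ?_
    rw [mem_powerset] at hS
    have hk : S.card ≤ M - 1 := hAcard ▸ card_le_card hS
    have e1 : (M - S.card).factorial = (M - S.card) * (M - S.card - 1).factorial := by
      rw [Nat.mul_factorial_pred (by omega)]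
    have e2 : ((M + 1).factorial : ℝ) = ((M : ℝ) + 1) * (M.factorial : ℝ) := by
      rw [Nat.factorial_succ]; push_cast; ring
    have hMf : (M.factorial : ℝ) ≠ 0 := Nat.cast_ne_zero.mpr M.factorial_ne_zero
    have hM1 : ((M : ℝ) + 1) ≠ 0 := by positivity
    rw [e1, e2]
    push_cast [Nat.cast_sub (show S.card ≤ M by omega)]
    field_simp
    ring
  have hc : (0:ℝ) < 1 / (2 * ((M + 1).factorial : ℝ)) := by positivity
  nlinarith [key, part2, mul_nonpos_of_nonneg_of_nonpos (le_of_lt hc) part2]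
end

section
/- (Bound on the Shapley value after replication.) Let N be a finite set with |N| = M ≥ 1, let i ∈ N, let i' ∉ N, and set N^R = N ∪ {i'}. Let v : Finset N^R → ℝ be supermodular, with v(N) > 0 and v(N^R) > 0, and let a_i ∈ ℝ be such that for every S ⊆ N^R \ {i} with i' ∈ S, v(S ∪ {i}) − v(S) ≤ a_i. Let φ(i) = (1/v(N)) · Σ_{S ⊆ N \ {i}} (|S|!(M−|S|−1)!/M!) · (v(S ∪ {i}) − v(S)) be the normalized Shapley value of i in the original market N, and let φ^R(i) = (1/v(N^R)) · Σ_{S ⊆ N^R \ {i}} (|S|!(M−|S|)!/(M+1)!) · (v(S ∪ {i}) − v(S)) be the normalized Shapley value of i in the replicated market N^R. Then φ^R(i) ≤ (φ(i) · v(N) + a_i) / (2 · v(N^R)). -/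
open Finset

/-- The normalized Shapley value of party `i` for the characteristic function `v`
in the market `market` with `m = |market|` parties:
`φ(v,i) = (1/v(market)) · Σ_{S ⊆ market \ {i}} (|S|!(m−|S|−1)!/m!) · (v(S∪{i}) − v(S))`. -/
noncomputable def shapley {ι : Type*} [DecidableEq ι] (market : Finset ι)
    (v : Finset ι → ℝ) (i : ι) : ℝ :=
  (1 / v market) * ∑ S ∈ (market.erase i).powerset,
    (S.card.factorial * (market.card - S.card - 1).factorial : ℝ)
      / (market.card.factorial : ℝ) * (v (insert i S) - v S)

/-!
Write `A = N \ {i}`, `n = |A|` and `Δ(S) = v(S ∪ {i}) - v(S)`, and let `w_m(t)` be the Shapley weight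
of a coalition of size `t` in a market of `m` players. The coalitions of `N^R \ {i}` are the `T ⊆ A`
and the `T ∪ {i'}`. The second kind carry total weight `Σ_T w_{n+2}(|T| + 1) = 1/2`, and each has
marginal at most `a_i`. For the first kind, `w_{n+2}(t) + w_{n+2}(t + 1) = w_{n+1}(t)` splits
`φ(i) v(N)` into `Σ_T w_{n+2}(|T|) Δ(T)` and `Σ_T w_{n+2}(|T| + 1) Δ(T)`. Supermodularity makes `Δ`
monotone, and summation by parts along the edges `T ⊂ T ∪ {x}` of the Boolean lattice shows that
the first of these two sums is the smaller one.
-/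

open scoped Nat

namespace Finset

variable {ι : Type*} [DecidableEq ι]

theorem sum_powerset_sum_sdiff_insert {β : Type*} [AddCommMonoid β] (A : Finset ι)
    (f : Finset ι → ι → β) :
    ∑ T ∈ A.powerset, ∑ x ∈ A \ T, f (insert x T) x = ∑ U ∈ A.powerset, ∑ x ∈ U, f U x := by
  rw [sum_sigma', sum_sigma']
  refine sum_nbij' (fun p => ⟨insert p.2 p.1, p.2⟩) (fun p => ⟨p.1.erase p.2, p.2⟩)
    ?_ ?_ ?_ ?_ (fun _ _ => rfl)
  · rintro ⟨T, x⟩ hp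
    simp only [mem_sigma, mem_powerset, mem_sdiff] at hp ⊢
    exact ⟨insert_subset hp.2.1 hp.1, mem_insert_self _ _⟩
  · rintro ⟨U, x⟩ hp
    simp only [mem_sigma, mem_powerset, mem_sdiff] at hp ⊢
    exact ⟨(erase_subset _ _).trans hp.1, hp.1 hp.2, notMem_erase _ _⟩
  · rintro ⟨T, x⟩ hp
    simp only [mem_sigma, mem_powerset, mem_sdiff] at hp
    simp [erase_insert hp.2.2]
  · rintro ⟨U, x⟩ hp
    simp only [mem_sigma, mem_powerset] at hp
    simp [insert_erase hp.2]

theorem sum_powerset_sum_sdiff_mul_sub (A : Finset ι) (c : ℕ → ℝ) (g : Finset ι → ℝ) :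
    ∑ T ∈ A.powerset, ∑ x ∈ A \ T, c (#T + 1) * (g (insert x T) - g T) =
      ∑ U ∈ A.powerset, (#U * c #U - (#A - #U : ℕ) * c (#U + 1)) * g U := by
  have h_up : ∑ T ∈ A.powerset, ∑ x ∈ A \ T, c (#T + 1) * g (insert x T) =
      ∑ U ∈ A.powerset, #U * c #U * g U := by
    have h_card : ∀ T ∈ A.powerset, ∀ x ∈ A \ T, #T + 1 = #(insert x T) := fun T _ x hx =>
      (card_insert_of_notMem (mem_sdiff.1 hx).2).symm
    rw [sum_congr rfl fun T hT => sum_congr rfl fun x hx => by rw [h_card T hT x hx],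
      sum_powerset_sum_sdiff_insert A fun U _ => c #U * g U]
    simp only [sum_const, nsmul_eq_mul, mul_assoc]
  have h_down : ∑ T ∈ A.powerset, ∑ x ∈ A \ T, c (#T + 1) * g T =
      ∑ U ∈ A.powerset, (#A - #U : ℕ) * c (#U + 1) * g U := by
    refine sum_congr rfl fun T hT => ?_
    rw [sum_const, card_sdiff_of_subset (mem_powerset.1 hT), nsmul_eq_mul, mul_assoc]
  simp only [mul_sub, sum_sub_distrib, h_up, h_down, sub_mul]

end Finset

noncomputable def shapleyWeight (m t : ℕ) : ℝ := (t ! * (m - t - 1)! : ℝ) / m !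

theorem shapley_eq_sum {ι : Type*} [DecidableEq ι] (market : Finset ι) (v : Finset ι → ℝ) (i : ι) :
    shapley market v i = 1 / v market *
      ∑ S ∈ (market.erase i).powerset, shapleyWeight #market #S * (v (insert i S) - v S) :=
  rfl

theorem shapleyWeight_nonneg (m t : ℕ) : 0 ≤ shapleyWeight m t := by
  unfold shapleyWeight; positivity

theorem shapleyWeight_add_shapleyWeight_succ {m t : ℕ} (h : t < m) :
    shapleyWeight (m + 1) t + shapleyWeight (m + 1) (t + 1) = shapleyWeight m t := by
  obtain ⟨k, rfl⟩ : ∃ k, m = t + k + 1 := ⟨m - t - 1, by omega⟩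
  simp only [shapleyWeight, show t + k + 1 + 1 - t - 1 = k + 1 by omega,
    show t + k + 1 + 1 - (t + 1) - 1 = k by omega, show t + k + 1 - t - 1 = k by omega,
    Nat.factorial_succ]
  push_cast
  field_simp
  ring

theorem succ_mul_shapleyWeight {m t : ℕ} (h : t + 2 ≤ m) :
    (t + 1) * shapleyWeight m t = (m - t - 1 : ℕ) * shapleyWeight m (t + 1) := by
  obtain ⟨k, rfl⟩ : ∃ k, m = t + k + 2 := ⟨m - t - 2, by omega⟩
  simp only [shapleyWeight, show t + k + 2 - t - 1 = k + 1 by omega,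
    show t + k + 2 - (t + 1) - 1 = k by omega, Nat.factorial_succ]
  push_cast
  ring

theorem sum_powerset_shapleyWeight_succ {ι : Type*} (A : Finset ι) :
    ∑ T ∈ A.powerset, shapleyWeight (#A + 2) (#T + 1) = 1 / 2 := by
  have h_term : ∀ t ≤ #A, (#A).choose t • shapleyWeight (#A + 2) (t + 1) =
      (t + 1) * ((#A)! / (#A + 2)! : ℝ) := by
    intro t ht
    rw [nsmul_eq_mul, shapleyWeight, show #A + 2 - (t + 1) - 1 = #A - t by omega,
      ← Nat.choose_mul_factorial_mul_factorial ht, Nat.factorial_succ t]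
    push_cast
    ring
  have h_gauss : ∑ t ∈ range (#A + 1), ((t : ℝ) + 1) = (#A + 1) * (#A + 2) / 2 := by
    have := sum_range_id_mul_two (#A + 2)
    rw [sum_range_succ'] at this
    rify at this
    push_cast at this
    linarith
  rw [sum_powerset_apply_card (fun t => shapleyWeight (#A + 2) (t + 1)),
    sum_congr rfl fun t ht => h_term t (Nat.lt_succ_iff.1 (mem_range.1 ht)), ← sum_mul, h_gauss,
    Nat.factorial_succ, Nat.factorial_succ]
  push_cast
  field_simp
  ring

theorem sum_shapleyWeight_le_sum_shapleyWeight_succ {ι : Type*} [DecidableEq ι] (A : Finset ι)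
    (g : Finset ι → ℝ) (hg : ∀ T ⊆ A, ∀ x ∈ A \ T, g T ≤ g (insert x T)) :
    ∑ T ∈ A.powerset, shapleyWeight (#A + 2) #T * g T ≤
      ∑ T ∈ A.powerset, shapleyWeight (#A + 2) (#T + 1) * g T := by
  have h_coeff : ∀ U ∈ A.powerset,
      #U * shapleyWeight (#A + 2) #U - (#A - #U : ℕ) * shapleyWeight (#A + 2) (#U + 1) =
        shapleyWeight (#A + 2) (#U + 1) - shapleyWeight (#A + 2) #U := by
    intro U hU
    have hUA := card_le_card (mem_powerset.1 hU)
    have := succ_mul_shapleyWeight (m := #A + 2) (t := #U) (by omega)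
    rw [show #A + 2 - #U - 1 = #A - #U + 1 by omega] at this
    push_cast at this
    linarith
  rw [← sub_nonneg, ← sum_sub_distrib]
  calc 0 ≤ ∑ T ∈ A.powerset, ∑ x ∈ A \ T,
        shapleyWeight (#A + 2) (#T + 1) * (g (insert x T) - g T) :=
        sum_nonneg fun T hT => sum_nonneg fun x hx =>
          mul_nonneg (shapleyWeight_nonneg _ _) (sub_nonneg.2 (hg T (mem_powerset.1 hT) x hx))
    _ = _ := by
        rw [sum_powerset_sum_sdiff_mul_sub]
        exact sum_congr rfl fun U hU => by rw [h_coeff U hU, sub_mul]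

theorem sum_powerset_insert_shapleyWeight_le {ι : Type*} [DecidableEq ι] (A : Finset ι) {j : ι}
    (hj : j ∉ A) (g : Finset ι → ℝ) (a : ℝ)
    (hg : ∀ T ⊆ A, ∀ x ∈ A \ T, g T ≤ g (insert x T)) (ha : ∀ T ⊆ A, g (insert j T) ≤ a) :
    ∑ S ∈ (insert j A).powerset, shapleyWeight (#A + 2) #S * g S ≤
      (∑ T ∈ A.powerset, shapleyWeight (#A + 1) #T * g T + a) / 2 := by
  have h_without : ∑ T ∈ A.powerset, shapleyWeight (#A + 2) #T * g T ≤
      (∑ T ∈ A.powerset, shapleyWeight (#A + 1) #T * g T) / 2 := by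
    have h_split : ∑ T ∈ A.powerset, shapleyWeight (#A + 1) #T * g T =
        ∑ T ∈ A.powerset, shapleyWeight (#A + 2) #T * g T +
          ∑ T ∈ A.powerset, shapleyWeight (#A + 2) (#T + 1) * g T := by
      rw [← sum_add_distrib]
      refine sum_congr rfl fun T hT => ?_
      rw [← add_mul, shapleyWeight_add_shapleyWeight_succ
        (Nat.lt_succ_of_le (card_le_card (mem_powerset.1 hT)))]
    linarith [sum_shapleyWeight_le_sum_shapleyWeight_succ A g hg]
  have h_with : ∑ T ∈ A.powerset, shapleyWeight (#A + 2) #(insert j T) * g (insert j T) ≤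
      a / 2 := by
    calc ∑ T ∈ A.powerset, shapleyWeight (#A + 2) #(insert j T) * g (insert j T)
        ≤ ∑ T ∈ A.powerset, shapleyWeight (#A + 2) (#T + 1) * a := by
          refine sum_le_sum fun T hT => ?_
          rw [card_insert_of_notMem fun hjT => hj (mem_powerset.1 hT hjT)]
          exact mul_le_mul_of_nonneg_left (ha T (mem_powerset.1 hT)) (shapleyWeight_nonneg _ _)
      _ = a / 2 := by rw [← sum_mul, sum_powerset_shapleyWeight_succ]; ring
  rw [sum_powerset_insert hj]
  linarith

theorem shapley_replication_bound_general {ι : Type*} [DecidableEq ι] (N : Finset ι)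
    (i : ι) (hi : i ∈ N) (i' : ι) (hi' : i' ∉ N)
    (NR : Finset ι) (hNR : NR = insert i' N)
    (v : Finset ι → ℝ) (a_i : ℝ)
    (hsuper : ∀ R Q : Finset ι, R ⊆ Q → Q ⊆ NR → ∀ x ∈ NR \ Q,
      v (insert x R) - v R ≤ v (insert x Q) - v Q)
    (hvN : 0 < v N) (hvNR : 0 < v NR)
    (hmarg : ∀ S ⊆ NR.erase i, i' ∈ S → v (insert i S) - v S ≤ a_i) :
    shapley NR v i ≤ (shapley N v i * v N + a_i) / (2 * v NR) := by
  set A := N.erase i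
  have hiA : i ∉ A := notMem_erase i N
  have hAN : A ⊆ NR := hNR ▸ (erase_subset i N).trans (subset_insert i' N)
  have hi'A : i' ∉ A := fun h => hi' (mem_of_mem_erase h)
  have hNRi : NR.erase i = insert i' A := by
    rw [hNR, erase_insert_of_ne fun h : i' = i => hi' (h ▸ hi)]
  have hcardN : #N = #A + 1 := (card_erase_add_one hi).symm
  have hcardNR : #NR = #A + 2 := by rw [hNR, card_insert_of_notMem hi', hcardN]
  have h_mono : ∀ T ⊆ A, ∀ x ∈ A \ T,
      v (insert i T) - v T ≤ v (insert i (insert x T)) - v (insert x T) := fun T hT x hx =>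
    hsuper T _ (subset_insert x T) (insert_subset (hAN (mem_sdiff.1 hx).1) (hT.trans hAN)) i
      (mem_sdiff.2 ⟨hNR ▸ mem_insert_of_mem hi, by
        simp only [mem_insert, not_or]
        exact ⟨(ne_of_mem_erase (mem_sdiff.1 hx).1).symm, fun h => hiA (hT h)⟩⟩)
  have h_bound : ∀ T ⊆ A, v (insert i (insert i' T)) - v (insert i' T) ≤ a_i := fun T hT =>
    hmarg _ (hNRi ▸ insert_subset_insert i' hT) (mem_insert_self i' T)
  have h_sum := sum_powerset_insert_shapleyWeight_le A hi'A (fun S => v (insert i S) - v S) a_i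
    h_mono h_bound
  rw [shapley_eq_sum, shapley_eq_sum, hNRi, hcardNR, hcardN, le_div_iff₀ (by positivity)]
  field_simp
  linarith

/-- bound on the Shapley value after replication: for a supermodular
`v` on the replicated market `N^R = N ∪ {i'}`, with marginal contributions of `i`
to coalitions containing the replica `i'` bounded by `a_i`, the normalized Shapley
value of `i` after replication satisfies
`φ^R(i) ≤ (φ(i)·v(N) + a_i) / (2·v(N^R))`. -/
theorem shapley_replication_bound {ι : Type*} [DecidableEq ι] (N : Finset ι)
    (M : ℕ) (hcard : N.card = M) (hM : 1 ≤ M)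
    (i : ι) (hi : i ∈ N) (i' : ι) (hi' : i' ∉ N)
    (NR : Finset ι) (hNR : NR = insert i' N)
    (v : Finset ι → ℝ) (a_i : ℝ)
    (hsuper : ∀ R Q : Finset ι, R ⊆ Q → Q ⊆ NR → ∀ x ∈ NR \ Q,
      v (insert x R) - v R ≤ v (insert x Q) - v Q)
    (hvN : 0 < v N) (hvNR : 0 < v NR)
    (hmarg : ∀ S ⊆ NR.erase i, i' ∈ S → v (insert i S) - v S ≤ a_i) :
    shapley NR v i ≤ (shapley N v i * v N + a_i) / (2 * v NR) :=
  shapley_replication_bound_general N i hi i' hi' NR hNR v a_i hsuper hvN hvNR hmarg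
end

section
/- Let N be a finite set, i ∈ N, i' ∉ N, N^R = N ∪ {i'}, and let g : Finset N^R → ℝ be such that i and i' are replicas with respect to g, i.e., g(S ∪ {i}) = g(S ∪ {i'}) = g(S ∪ {i, i'}) for every S ⊆ N^R. Define v(S) = (|S|+1)·g(S) − Σ_{j∈S} g({j}) and a_i = g(N) − g({i}). Then the value of the replicated market exceeds the value of the original market by exactly party i's gain: v(N^R) = v(N) + a_i. -/
open Finset

/-- if `i ∈ N` and its replica `i' ∉ N` satisfy
`g(S ∪ {i}) = g(S ∪ {i'}) = g(S ∪ {i,i'})` for every `S ⊆ N^R = N ∪ {i'}`, then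
the single-task market value after replication satisfies
`v(N^R) = v(N) + a_i` where `a_i = g(N) − g({i})`. -/
theorem singleTask_replicated_market_value {ι : Type*} [DecidableEq ι] (N : Finset ι)
    (i : ι) (hi : i ∈ N) (i' : ι) (hi' : i' ∉ N)
    (NR : Finset ι) (hNR : NR = insert i' N)
    (g : Finset ι → ℝ)
    (hrep : ∀ S ⊆ NR, g (S ∪ {i}) = g (S ∪ {i'}) ∧ g (S ∪ {i'}) = g (S ∪ {i, i'}))
    (a_i : ℝ) (hai : a_i = g N - g {i}) :
    singleTaskValue g NR = singleTaskValue g N + a_i := by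
  have hNsub : N ⊆ NR := by rw [hNR]; exact subset_insert _ _
  -- g(NR) = g(N)
  have h1 : g NR = g N := by
    have h := (hrep N hNsub).1
    have hNi : N ∪ {i} = N := by
      simp [union_comm, hi]
    have hNi' : N ∪ {i'} = NR := by
      rw [hNR, union_comm]; rfl
    rw [hNi, hNi'] at h
    exact h.symm
  -- g({i'}) = g({i})
  have h2 : g {i'} = g {i} := by
    have h := (hrep ∅ (empty_subset _)).1
    simpa using h.symm
  have hcard : (NR.card : ℝ) = (N.card : ℝ) + 1 := by
    rw [hNR, card_insert_of_notMem hi']; push_cast; ring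
  have hsum : ∑ j ∈ NR, g {j} = g {i'} + ∑ j ∈ N, g {j} := by
    rw [hNR, sum_insert hi']
  unfold singleTaskValue
  rw [h1, hcard, hsum, h2, hai]
  ring
end

section
/- Let N be a finite set and, for each j ∈ N, let g_j : Finset N → ℝ be nonnegative, monotone (g_j(R) ≤ g_j(Q) whenever R ⊆ Q), and supermodular. Let D ⊆ N be any subset (indexing the distinct validation tasks). Define the multi-task characteristic function w : Finset N → ℝ by w(S) = Σ_{j∈D} g_j(S) + Σ_{k∈S}(g_k(S) − g_k({k})). Then w is supermodular: for all R ⊆ Q ⊆ N and x ∈ N \ Q, w(R ∪ {x}) − w(R) ≤ w(Q ∪ {x}) − w(Q). -/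
open Finset

/-- The multi-task characteristic function
`w(S) = Σ_{j∈D} g_j(S) + Σ_{k∈S} (g_k(S) − g_k({k}))`, where `D` indexes the
distinct validation tasks. -/
noncomputable def multiTaskValue {ι : Type*} [DecidableEq ι] (D : Finset ι)
    (g : ι → Finset ι → ℝ) (S : Finset ι) : ℝ :=
  ∑ j ∈ D, g j S + ∑ k ∈ S, (g k S - g k {k})

/-- if each gain function `g_j` (for `j ∈ N`) is nonnegative,
monotone and supermodular, then the multi-task characteristic function `w` is
supermodular. -/
theorem multiTask_supermodular {ι : Type*} [DecidableEq ι] (N : Finset ι)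
    (g : ι → Finset ι → ℝ)
    (hg_nonneg : ∀ j ∈ N, ∀ S ⊆ N, 0 ≤ g j S)
    (hg_mono : ∀ j ∈ N, ∀ R Q : Finset ι, R ⊆ Q → Q ⊆ N → g j R ≤ g j Q)
    (hg_super : ∀ j ∈ N, ∀ R Q : Finset ι, R ⊆ Q → Q ⊆ N → ∀ x ∈ N \ Q,
      g j (insert x R) - g j R ≤ g j (insert x Q) - g j Q)
    (D : Finset ι) (hD : D ⊆ N) :
    ∀ R Q : Finset ι, R ⊆ Q → Q ⊆ N → ∀ x ∈ N \ Q,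
      multiTaskValue D g (insert x R) - multiTaskValue D g R
        ≤ multiTaskValue D g (insert x Q) - multiTaskValue D g Q := by
  intro R Q hRQ hQN x hx
  rw [mem_sdiff] at hx
  obtain ⟨hxN, hxQ⟩ := hx
  have hxR : x ∉ R := fun h => hxQ (hRQ h)
  have hRN : R ⊆ N := hRQ.trans hQN
  have hxQN : insert x Q ⊆ N := insert_subset hxN hQN
  unfold multiTaskValue
  rw [sum_insert hxR, sum_insert hxQ]
  have h1 : ∑ j ∈ D, g j (insert x R) - ∑ j ∈ D, g j R
      ≤ ∑ j ∈ D, g j (insert x Q) - ∑ j ∈ D, g j Q := by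
    rw [← sum_sub_distrib, ← sum_sub_distrib]
    exact sum_le_sum fun j hj =>
      hg_super j (hD hj) R Q hRQ hQN x (mem_sdiff.mpr ⟨hxN, hxQ⟩)
  have h2 : g x (insert x R) ≤ g x (insert x Q) :=
    hg_mono x hxN _ _ (insert_subset_insert _ hRQ) hxQN
  have h3 : ∑ k ∈ R, (g k (insert x R) - g k {k}) - ∑ k ∈ R, (g k R - g k {k})
      ≤ ∑ k ∈ Q, (g k (insert x Q) - g k {k}) - ∑ k ∈ Q, (g k Q - g k {k}) := by
    rw [← sum_sub_distrib, ← sum_sub_distrib]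
    simp only [sub_sub_sub_cancel_right]
    rw [← sum_sdiff hRQ]
    have hle : ∑ k ∈ R, (g k (insert x R) - g k R)
        ≤ ∑ k ∈ R, (g k (insert x Q) - g k Q) :=
      sum_le_sum fun k _ => hg_super k (hRN ‹k ∈ R›) R Q hRQ hQN x
        (mem_sdiff.mpr ⟨hxN, hxQ⟩)
    have h0 : 0 ≤ ∑ k ∈ Q \ R, (g k (insert x Q) - g k Q) :=
      sum_nonneg fun k hk => sub_nonneg.mpr
        (hg_mono k (hQN (mem_sdiff.mp hk).1) Q (insert x Q) (subset_insert _ _) hxQN)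
    linarith
  linarith
end

section
/- Let N be a finite set, i ∈ N, i' ∉ N, N^R = N ∪ {i'}, D ⊆ N, and for each k ∈ N^R let g_k : Finset N^R → ℝ with g_{i'} = g_i, and suppose every g_j (j ∈ N^R ∪ D) satisfies the replica property with respect to {i, i'}: g_j(S ∪ {i}) = g_j(S ∪ {i'}) = g_j(S ∪ {i, i'}) for every S ⊆ N^R. Define w(S) = Σ_{j∈D} g_j(S) + Σ_{k∈S}(g_k(S) − g_k({k})). Then for every S ⊆ N^R \ {i} with i' ∈ S, w(S ∪ {i}) − w(S) = g_i(S) − g_i({i}); consequently, if g_i is monotone, w(S ∪ {i}) − w(S) ≤ g_i(N) − g_i({i}) = a_i, the gain of party i from the full market. -/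
open Finset

/-- with `N^R = N ∪ {i'}`, `g_{i'} = g_i`, and every gain function
satisfying the replica property with respect to `{i, i'}`, for every coalition
`S ⊆ N^R \ {i}` containing `i'` the marginal contribution of `i` to the multi-task
characteristic function is `w(S ∪ {i}) − w(S) = g_i(S) − g_i({i})`; consequently,
if `g_i` is monotone, it is at most `a_i = g_i(N) − g_i({i})`. -/
theorem multiTask_replica_marginal {ι : Type*} [DecidableEq ι] (N : Finset ι)
    (i : ι) (hi : i ∈ N) (i' : ι) (hi' : i' ∉ N)
    (NR : Finset ι) (hNR : NR = insert i' N)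
    (D : Finset ι) (hD : D ⊆ N)
    (g : ι → Finset ι → ℝ) (hgi' : g i' = g i)
    (hrep : ∀ j ∈ NR, ∀ S ⊆ NR,
      g j (S ∪ {i}) = g j (S ∪ {i'}) ∧ g j (S ∪ {i'}) = g j (S ∪ {i, i'})) :
    (∀ S ⊆ NR.erase i, i' ∈ S →
        multiTaskValue D g (insert i S) - multiTaskValue D g S = g i S - g i {i}) ∧
    ((∀ R Q : Finset ι, R ⊆ Q → Q ⊆ NR → g i R ≤ g i Q) →
      ∀ S ⊆ NR.erase i, i' ∈ S →
        multiTaskValue D g (insert i S) - multiTaskValue D g S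
          ≤ g i N - g i {i}) := by
  have hNsub : N ⊆ NR := by rw [hNR]; exact subset_insert _ _
  have key : ∀ j ∈ NR, ∀ S ⊆ NR, i' ∈ S → g j (insert i S) = g j S := by
    intro j hj S hS hi'S
    obtain ⟨h1, _⟩ := hrep j hj S hS
    have h2 : S ∪ {i'} = S := union_eq_left.mpr (singleton_subset_iff.mpr hi'S)
    have h3 : S ∪ {i} = insert i S := union_comm S {i} ▸ rfl
    rw [← h3, h1, h2]
  have main : ∀ S ⊆ NR.erase i, i' ∈ S →
      multiTaskValue D g (insert i S) - multiTaskValue D g S = g i S - g i {i} := by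
    intro S hS hi'S
    have hSNR : S ⊆ NR := hS.trans (erase_subset _ _)
    have hiS : i ∉ S := fun h => (mem_erase.mp (hS h)).1 rfl
    have hDeq : ∀ j ∈ D, g j (insert i S) = g j S := fun j hj =>
      key j (hNsub (hD hj)) S hSNR hi'S
    have hkeq : ∀ k ∈ S, g k (insert i S) = g k S := fun k hk =>
      key k (hSNR hk) S hSNR hi'S
    have hieq : g i (insert i S) = g i S := key i (hNsub hi) S hSNR hi'S
    unfold multiTaskValue
    have hsum : ∑ k ∈ S, (g k (insert i S) - g k {k}) = ∑ k ∈ S, (g k S - g k {k}) :=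
      sum_congr rfl fun k hk => by rw [hkeq k hk]
    rw [sum_congr rfl hDeq, sum_insert hiS, hieq, hsum]
    ring
  refine ⟨main, fun hmono S hS hi'S => ?_⟩
  rw [main S hS hi'S]
  have hSNR : S ⊆ NR := hS.trans (erase_subset _ _)
  have hNeq : g i NR = g i N := by
    have := (hrep i (hNsub hi) N hNsub).1
    have hNi : N ∪ {i} = N := union_eq_left.mpr (singleton_subset_iff.mpr hi)
    have hNi' : N ∪ {i'} = NR := by rw [hNR, union_comm]; rfl
    rw [hNi, hNi'] at this
    exact this.symm
  have := hmono S NR hSNR le_rfl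
  linarith [hNeq ▸ this]
end
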